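/- Let Γ be a connected k-regular graph on n vertices with d+1 distinct eigenvalues and odd-girth at least 2d+1. Then for every vertex u, (A^{2d+1})_{uu} = k_d(u) · ã_d · π_0² / n², where k_d(u) is the number of vertices at distance d from u, ã_d = Σ_{i=0}^d λ_i, and π_0 = ∏_{i=1}^d (k − λ_i). -/

import Mathlib

/-!
Let `q = ∏ᵢ (X - λᵢ)` and `p = q / (X - k)`. Since `A` is symmetric with spectrum `{λᵢ}`,
`q(A) = 0`, so the columns of `p(A)` lie in the `k`-eigenspace, which for a connected `k`-regular
graph consists of the constant vectors; as `p(A)` is also symmetric, it is the constant matrix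
`π₀/n · J`. Entries of `A^i` vanish when `i < dist(u,v)`, so on pairs at distance at least `d`
the matrix `p(A)` (monic of degree `d`) agrees with `A^d`; hence the diameter is at most `d`, and
`q(A) = 0` gives `(A^{d+1})_{uv} = ã_d π₀/n` at distance `d`. In
`(A^{2d+1})_{uu} = Σ_v (A^d)_{uv} (A^{d+1})_{uv}` the terms with `dist(u,v) < d` vanish: one of
`d + dist(u,v)`, `d + 1 + dist(u,v)` is odd and at most `2d`, and a walk of that length closed up
by a geodesic would contain an odd cycle shorter than `2d + 1`.
-/

open SimpleGraph Matrix Finset Polynomial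

namespace SimpleGraph.Walk

variable {V : Type*} {G : SimpleGraph V}

/-- Prepending an edge `a – a'` to a path `r : a' ⟶ v` either yields a path, or, up to the first
visit of `r` to `a`, closes a cycle through that edge; the cycle is kept if odd, and otherwise
discarded together with the edge, leaving the rest of `r`, a shorter path of the right parity. -/
theorem exists_odd_isCycle_or_isPath [DecidableEq V] {u v : V} (p : G.Walk u v) :
    (∃ (x : V) (c : G.Walk x x), c.IsCycle ∧ Odd c.length ∧ c.length ≤ p.length) ∨
      ∃ r : G.Walk u v, r.IsPath ∧ r.length ≤ p.length ∧ r.length % 2 = p.length % 2 := by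
  induction p with
  | nil => exact .inr ⟨nil, .nil, le_rfl, rfl⟩
  | @cons a a' b h p ih =>
    rcases ih with ⟨x, c, hc, hodd, hle⟩ | ⟨r, hr, hle, hpar⟩
    · exact .inl ⟨x, c, hc, hodd, by rw [length_cons]; omega⟩
    by_cases ha : a ∈ r.support
    · have hlen := congrArg length (r.take_spec ha)
      rw [length_append] at hlen
      rcases Nat.even_or_odd (r.takeUntil a ha).length with heven | hodd
      · have hpos : (r.takeUntil a ha).length ≠ 0 := fun h0 =>
          h.ne (eq_of_length_eq_zero h0).symm
        refine .inl ⟨a, cons h (r.takeUntil a ha), ?_, ?_, ?_⟩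
        · rw [isCycle_iff_isPath_tail_and_le_length]
          refine ⟨by simpa using hr.takeUntil ha, ?_⟩
          rw [length_cons]
          obtain ⟨j, hj⟩ := heven
          omega
        · rw [length_cons]; exact heven.add_one
        · rw [length_cons, length_cons]; omega
      · refine .inr ⟨r.dropUntil a ha, hr.dropUntil ha, ?_, ?_⟩ <;> rw [length_cons]
        · omega
        · obtain ⟨j, hj⟩ := hodd
          omega
    · exact .inr ⟨cons h r, hr.cons ha, by simp only [length_cons]; omega,
        by simp only [length_cons]; omega⟩

theorem exists_odd_isCycle_of_odd_length [DecidableEq V] {u : V} (w : G.Walk u u)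
    (hw : Odd w.length) :
    ∃ (x : V) (c : G.Walk x x), c.IsCycle ∧ Odd c.length ∧ c.length ≤ w.length := by
  refine w.exists_odd_isCycle_or_isPath.resolve_right ?_
  rintro ⟨r, hr, -, hpar⟩
  rw [length_eq_zero_iff.mpr (isPath_iff_nil.mp hr)] at hpar
  have := Nat.odd_iff.mp hw
  omega

end SimpleGraph.Walk

namespace SimpleGraph

variable {V : Type*} {G : SimpleGraph V}

theorem Walk.even_length_add_dist {g : ℕ}
    (hg : ∀ (x : V) (c : G.Walk x x), c.IsCycle → Odd c.length → g ≤ c.length) {u v : V}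
    (p : G.Walk u v) (hp : p.length + G.dist u v < g) : Even (p.length + G.dist u v) := by
  classical
  obtain ⟨s, hs⟩ := p.reachable.exists_walk_length_eq_dist
  have hlen : (p.append s.reverse).length = p.length + G.dist u v := by simp [hs]
  by_contra hodd
  obtain ⟨x, c, hc, hco, hle⟩ := (p.append s.reverse).exists_odd_isCycle_of_odd_length
    (hlen ▸ Nat.not_even_iff_odd.mp hodd)
  have := hg x c hc hco
  omega

variable [Fintype V] [DecidableEq V] [DecidableRel G.Adj] {R : Type*}

theorem adjMatrix_pow_apply_eq_zero_of_forall_length_ne [Semiring R] {m : ℕ} {u v : V}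
    (h : ∀ p : G.Walk u v, p.length ≠ m) : (G.adjMatrix R ^ m) u v = 0 := by
  rw [adjMatrix_pow_apply_eq_card_walk,
    Fintype.card_eq_zero_iff.mpr ⟨fun ⟨p, hp⟩ => h p hp⟩, Nat.cast_zero]

theorem adjMatrix_pow_apply_eq_zero_of_lt_dist [Semiring R] {m : ℕ} {u v : V}
    (h : m < G.dist u v) : (G.adjMatrix R ^ m) u v = 0 :=
  adjMatrix_pow_apply_eq_zero_of_forall_length_ne fun p hp => (hp ▸ h).not_ge (G.dist_le p)

theorem adjMatrix_pow_mul_pow_succ_apply_eq_zero [Semiring R] {m : ℕ}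
    (hg : ∀ (x : V) (c : G.Walk x x), c.IsCycle → Odd c.length → 2 * m + 1 ≤ c.length)
    {u v : V} (h : G.dist u v < m) :
    (G.adjMatrix R ^ m) u v * (G.adjMatrix R ^ (m + 1)) u v = 0 := by
  have hvanish (i : ℕ) (hi : i ≤ m + 1) (hodd : ¬Even (i + G.dist u v)) :
      (G.adjMatrix R ^ i) u v = 0 :=
    adjMatrix_pow_apply_eq_zero_of_forall_length_ne fun p hp =>
      hodd (hp ▸ p.even_length_add_dist hg (by omega))
  rcases Nat.even_or_odd (m + G.dist u v) with heven | hodd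
  · have hodd' : ¬Even (m + 1 + G.dist u v) := by
      rw [add_right_comm]; exact Nat.not_even_iff_odd.mpr heven.add_one
    rw [hvanish (m + 1) le_rfl hodd', mul_zero]
  · rw [hvanish m m.le_succ (Nat.not_even_iff_odd.mpr hodd), zero_mul]

theorem adjMatrix_aeval_apply_eq_sum_Ico [CommSemiring R] {r : R[X]} {m n : ℕ} {u v : V}
    (hr : r.natDegree < n) (hm : m ≤ G.dist u v) :
    aeval (G.adjMatrix R) r u v =
      ∑ i ∈ Ico m n, r.coeff i * (G.adjMatrix R ^ i) u v := by
  rw [aeval_eq_sum_range' hr, Matrix.sum_apply]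
  simp only [Matrix.smul_apply, smul_eq_mul]
  refine (sum_subset (fun i hi => ?_) fun i hi hi' => ?_).symm
  · exact mem_range.mpr (mem_Ico.mp hi).2
  · have him : i < m := by simp_all
    rw [adjMatrix_pow_apply_eq_zero_of_lt_dist (by omega), mul_zero]

end SimpleGraph

namespace Matrix

variable {n : Type*} [Fintype n] [DecidableEq n]

theorem aeval_mulVec_of_mulVec_eq_smul {R : Type*} [CommRing R] {A : Matrix n n R} {x : n → R}
    {μ : R} (hx : A *ᵥ x = μ • x) (p : R[X]) : aeval A p *ᵥ x = p.eval μ • x := by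
  have hx' : toLinAlgEquiv' A x = μ • x := by rwa [toLinAlgEquiv'_apply]
  rw [← toLinAlgEquiv'_apply, ← aeval_algHom_apply]
  exact Module.End.aeval_apply_of_mem_apply_eq_smul hx'

namespace IsHermitian

variable {𝕜 : Type*} [RCLike 𝕜] {A : Matrix n n 𝕜}

theorem aeval_prod_X_sub_C_eq_zero (hA : A.IsHermitian) {ι : Type*} [Fintype ι] {lam : ι → ℝ}
    (hspec : spectrum ℝ A ⊆ Set.range lam) :
    Polynomial.aeval A (∏ i, (X - C (lam i))) = 0 := by
  have hvanish : (spectrum ℝ A).EqOn (∏ i, (X - C (lam i))).eval 0 := fun x hx => by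
    obtain ⟨i, rfl⟩ := hspec hx
    simpa [eval_prod] using prod_eq_zero (mem_univ i) (by simp)
  rw [← cfc_polynomial _ A hA.isSelfAdjoint, cfc_congr hvanish, cfc_zero ℝ A]

protected theorem aeval (hA : A.IsHermitian) (q : ℝ[X]) : (Polynomial.aeval A q).IsHermitian := by
  rw [← cfc_polynomial q A hA.isSelfAdjoint]
  exact cfc_predicate _ A

end IsHermitian

end Matrix

namespace SimpleGraph

variable {V : Type*} [Fintype V] [DecidableEq V] {G : SimpleGraph V} [DecidableRel G.Adj] {k : ℕ}

theorem IsRegularOfDegree.apply_eq_of_adjMatrix_mulVec_eq_smul (hreg : G.IsRegularOfDegree k)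
    (hconn : G.Connected) {x : V → ℝ} (hx : G.adjMatrix ℝ *ᵥ x = (k : ℝ) • x)
    (i j : V) : x i = x j := by
  have hlap : G.lapMatrix ℝ *ᵥ x = 0 := by
    ext w
    rw [lapMatrix_mulVec_apply, ← adjMatrix_mulVec_apply, hx, hreg.degree_eq w]
    simp
  exact (lapMatrix_mulVec_eq_zero_iff_forall_reachable G).mp hlap i j (hconn i j)

theorem IsRegularOfDegree.aeval_adjMatrix_apply (hreg : G.IsRegularOfDegree k)
    (hconn : G.Connected) {p : ℝ[X]}
    (hp : aeval (G.adjMatrix ℝ) ((X - C (k : ℝ)) * p) = 0) (x y : V) :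
    aeval (G.adjMatrix ℝ) p x y = p.eval (k : ℝ) / Fintype.card V := by
  set B := aeval (G.adjMatrix ℝ) p
  have hAB : G.adjMatrix ℝ * B = (k : ℝ) • B := by
    rwa [map_mul, map_sub, aeval_X, aeval_C, sub_mul, sub_eq_zero, Algebra.algebraMap_eq_smul_one,
      smul_mul_assoc, one_mul] at hp
  have hcol (j x y : V) : B x j = B y j := by
    refine hreg.apply_eq_of_adjMatrix_mulVec_eq_smul hconn (x := fun i => B i j) ?_ x y
    ext i
    simpa [mul_apply, mulVec, dotProduct] using congr_fun₂ hAB i j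
  have hsymm (x y : V) : B x y = B y x := by
    simpa using ((G.isHermitian_adjMatrix ℝ).aeval p).apply y x
  have hrow : ∑ v, B x v = p.eval (k : ℝ) := by
    have hone : G.adjMatrix ℝ *ᵥ (fun _ => (1 : ℝ)) = (k : ℝ) • fun _ => 1 := by
      ext; simp [hreg.degree_eq]
    simpa [mulVec, dotProduct] using congr_fun (Matrix.aeval_mulVec_of_mulVec_eq_smul hone p) x
  have hconst (v : V) : B x v = B x y := by
    rw [hcol v x y, hsymm, hcol y v x]
  have : Nonempty V := hconn.nonempty
  rw [← hrow, sum_congr rfl fun v _ => hconst v, sum_const, card_univ,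
    nsmul_eq_mul, mul_div_cancel_left₀ _ (Nat.cast_ne_zero.mpr Fintype.card_ne_zero)]

section Spectrum

variable {d : ℕ} {lam : Fin (d + 1) → ℝ}

theorem adjMatrix_pow_apply_of_le_dist (hconn : G.Connected) (hreg : G.IsRegularOfDegree k)
    (h0 : lam 0 = k) (hspec : spectrum ℝ (G.adjMatrix ℝ) ⊆ Set.range lam) {x y : V}
    (hxy : d ≤ G.dist x y) :
    (G.adjMatrix ℝ ^ d) x y =
      (∏ i ∈ Ioi (0 : Fin (d + 1)), ((k : ℝ) - lam i)) / Fintype.card V := by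
  set p : ℝ[X] := ∏ j : Fin d, (X - C (lam j.succ))
  have hp : (X - C (k : ℝ)) * p = ∏ i, (X - C (lam i)) := by rw [Fin.prod_univ_succ, h0]
  have hdeg : p.natDegree = d := by simp [p]
  have hB := hreg.aeval_adjMatrix_apply hconn
    (hp ▸ (G.isHermitian_adjMatrix ℝ).aeval_prod_X_sub_C_eq_zero hspec) x y
  rw [adjMatrix_aeval_apply_eq_sum_Ico (n := d + 1) (by omega) hxy, Nat.Ico_succ_singleton,
    sum_singleton, ← hdeg, (monic_prod_X_sub_C _ _).coeff_natDegree, one_mul, hdeg] at hB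
  rw [hB, eval_prod, Fin.prod_Ioi_zero]
  simp

theorem dist_le_of_spectrum_subset_range (hconn : G.Connected) (hreg : G.IsRegularOfDegree k)
    (hanti : StrictAnti lam) (h0 : lam 0 = k)
    (hspec : spectrum ℝ (G.adjMatrix ℝ) ⊆ Set.range lam) (x y : V) : G.dist x y ≤ d := by
  by_contra! hlt
  have hpos : 0 < ∏ i ∈ Ioi (0 : Fin (d + 1)), ((k : ℝ) - lam i) :=
    prod_pos fun i hi => sub_pos.mpr (h0 ▸ hanti (mem_Ioi.mp hi))
  have hn : (0 : ℝ) < Fintype.card V :=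
    Nat.cast_pos.mpr (Fintype.card_pos_iff.mpr hconn.nonempty)
  have h := adjMatrix_pow_apply_of_le_dist hconn hreg h0 hspec hlt.le
  rw [adjMatrix_pow_apply_eq_zero_of_lt_dist hlt] at h
  exact (div_pos hpos hn).ne h

theorem adjMatrix_pow_succ_apply_of_dist_eq (hconn : G.Connected) (hreg : G.IsRegularOfDegree k)
    (h0 : lam 0 = k) (hspec : spectrum ℝ (G.adjMatrix ℝ) ⊆ Set.range lam) {x y : V}
    (hxy : G.dist x y = d) :
    (G.adjMatrix ℝ ^ (d + 1)) x y = (∑ i, lam i) *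
      ((∏ i ∈ Ioi (0 : Fin (d + 1)), ((k : ℝ) - lam i)) / Fintype.card V) := by
  set q : ℝ[X] := ∏ i, (X - C (lam i))
  have hq := congr_fun₂ ((G.isHermitian_adjMatrix ℝ).aeval_prod_X_sub_C_eq_zero hspec) x y
  have hdeg : q.natDegree = d + 1 := by simp [q]
  have hlead : q.coeff (d + 1) = 1 := hdeg ▸ (monic_prod_X_sub_C _ _).coeff_natDegree
  have hnext : q.coeff d = -∑ i, lam i := by
    simpa using prod_X_sub_C_coeff_card_pred univ lam (by simp)
  rw [adjMatrix_aeval_apply_eq_sum_Ico (r := q) (n := d + 2) (by omega) hxy.ge,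
    sum_Ico_succ_top (by omega), Nat.Ico_succ_singleton, sum_singleton, hlead, hnext,
    adjMatrix_pow_apply_of_le_dist hconn hreg h0 hspec hxy.ge] at hq
  simp only [Matrix.zero_apply] at hq
  linarith

end Spectrum

end SimpleGraph

/-- In a connected `k`-regular graph on `n` vertices with `d+1` distinct
eigenvalues `k = λ₀ > ⋯ > λ_d` and odd-girth at least `2d+1`, for every vertex `u`
one has `(A^{2d+1})_{uu} = k_d(u) · ã_d · π₀² / n²`, where `k_d(u)` is the number of
vertices at distance `d` from `u`. -/
theorem stmt_7 {V : Type*} [Fintype V] [DecidableEq V] (G : SimpleGraph V)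
    [DecidableRel G.Adj] (k d : ℕ) (lam : Fin (d + 1) → ℝ)
    (hconn : G.Connected) (hreg : G.IsRegularOfDegree k)
    (hanti : StrictAnti lam) (h0 : lam 0 = (k : ℝ))
    (hspec : spectrum ℝ (G.adjMatrix ℝ) = Set.range lam)
    (hog : ∀ (u : V) (w : G.Walk u u), w.IsCycle → Odd w.length → 2 * d + 1 ≤ w.length) :
    ∀ u : V, ((G.adjMatrix ℝ) ^ (2 * d + 1)) u u
      = ((Finset.univ.filter (fun v => G.dist u v = d)).card : ℝ) *
          (∑ i : Fin (d + 1), lam i) *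
          (∏ i ∈ Finset.Ioi (0 : Fin (d + 1)), ((k : ℝ) - lam i)) ^ 2
          / (Fintype.card V : ℝ) ^ 2 := by
  intro u
  set A := G.adjMatrix ℝ
  have hsplit : (A ^ (2 * d + 1)) u u = ∑ v, (A ^ d) u v * (A ^ (d + 1)) u v := by
    rw [two_mul, add_assoc, pow_add, mul_apply]
    exact sum_congr rfl fun v _ => by rw [(G.isSymm_adjMatrix.pow (d + 1)).apply]
  have hfar (v : V) (hv : G.dist u v = d) : (A ^ d) u v * (A ^ (d + 1)) u v =
      (∑ i, lam i) * (∏ i ∈ Ioi (0 : Fin (d + 1)), ((k : ℝ) - lam i)) ^ 2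
        / (Fintype.card V : ℝ) ^ 2 := by
    rw [adjMatrix_pow_apply_of_le_dist hconn hreg h0 hspec.subset hv.ge,
      adjMatrix_pow_succ_apply_of_dist_eq hconn hreg h0 hspec.subset hv]
    ring
  have hnear (v : V) (hv : G.dist u v ≠ d) : (A ^ d) u v * (A ^ (d + 1)) u v = 0 :=
    adjMatrix_pow_mul_pow_succ_apply_eq_zero hog
      ((dist_le_of_spectrum_subset_range hconn hreg hanti h0 hspec.subset u v).lt_of_ne hv)
  rw [hsplit, ← sum_filter_add_sum_filter_not univ (G.dist u · = d),
    sum_congr rfl fun v hv => hfar v (mem_filter.mp hv).2,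
    sum_eq_zero fun v hv => hnear v (mem_filter.mp hv).2, sum_const, nsmul_eq_mul]
  ring
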